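/- Let d ∈ ℕ, d ≥ 1, and let σ and ρ be positive semidefinite d×d complex matrices. Then tr(|ρ^{1/2}σ^{1/2}|) equals the supremum of |tr(x)| over all d×d complex matrices x for which the 2d×2d block matrix [[σ, x], [x*, ρ]] is positive semidefinite. -/

import Mathlib

/-!
Write the block matrix as the Gram matrix of two column blocks `T₁, T₂`, so that `σ = T₁ᴴ T₁`,
`x = T₁ᴴ T₂`, `ρ = T₂ᴴ T₂`. Polar decompositions `T₁ = U σ^{1/2}` and
`T₂ σ^{1/2} = V |ρ^{1/2} σ^{1/2}|` with contractions `U, V` give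
`tr x = tr (Uᴴ V |ρ^{1/2} σ^{1/2}|)`, and the Cauchy–Schwarz inequality for the trace inner
product bounds this by `tr |ρ^{1/2} σ^{1/2}|`. The bound is attained at `x = σ^{1/2} Wᴴ ρ^{1/2}`,
where `ρ^{1/2} σ^{1/2} = W |ρ^{1/2} σ^{1/2}|`.
-/

open scoped ComplexOrder
open Matrix

open scoped Classical in
/-- The positive semidefinite square root of a positive semidefinite matrix
(junk value `0` if the matrix is not positive semidefinite). -/
noncomputable def matSqrt {d : ℕ} (M : Matrix (Fin d) (Fin d) ℂ) : Matrix (Fin d) (Fin d) ℂ :=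
  if h : M.PosSemidef then (h.1.eigenvectorUnitary.1 * diagonal ((↑) ∘ (√·) ∘ h.1.eigenvalues) *
    (star h.1.eigenvectorUnitary : Matrix (Fin d) (Fin d) ℂ)) else 0

/-- The absolute value `|X| = (Xᴴ X)^{1/2}` of a matrix. -/
noncomputable def matAbs {d : ℕ} (X : Matrix (Fin d) (Fin d) ℂ) : Matrix (Fin d) (Fin d) ℂ :=
  matSqrt (Xᴴ * X)

/-- The fidelity `F(σ, ρ) = tr |σ^{1/2} ρ^{1/2}|` of two matrices, as a real number. -/
noncomputable def matFid {d : ℕ} (σ ρ : Matrix (Fin d) (Fin d) ℂ) : ℝ :=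
  ((matAbs (matSqrt σ * matSqrt ρ)).trace).re

open scoped MatrixOrder

namespace Matrix

variable {𝕜 : Type*} [RCLike 𝕜] {l m n : Type*} [Fintype l]

lemma conjTranspose_fromCols_mul_fromCols (A : Matrix l m 𝕜) (B : Matrix l n 𝕜) :
    (fromCols A B)ᴴ * fromCols A B = fromBlocks (Aᴴ * A) (Aᴴ * B) (Bᴴ * A) (Bᴴ * B) := by
  rw [conjTranspose_fromCols_eq_fromRows_conjTranspose, fromRows_mul_fromCols]

variable [Fintype m]

lemma conjTranspose_fromRows_mul_fromRows (A B : Matrix l n 𝕜) (C D : Matrix m n 𝕜) :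
    (fromRows A C)ᴴ * fromRows B D = Aᴴ * B + Cᴴ * D := by
  rw [conjTranspose_fromRows_eq_fromCols_conjTranspose, fromCols_mul_fromRows]

variable [Fintype n]

lemma norm_trace_conjTranspose_mul_le (A B : Matrix m n 𝕜) :
    ‖(Aᴴ * B).trace‖ ≤ √(RCLike.re (Aᴴ * A).trace) * √(RCLike.re (Bᴴ * B).trace) := by
  have h (X Y : Matrix m n 𝕜) :
      (Xᴴ * Y).trace = inner 𝕜 (WithLp.toLp 2 X.vec) (WithLp.toLp 2 Y.vec) := by
    rw [EuclideanSpace.inner_toLp_toLp, dotProduct_comm, star_vec_dotProduct_vec]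
  rw [h, h, h, ← norm_eq_sqrt_re_inner, ← norm_eq_sqrt_re_inner]
  exact norm_inner_le_norm _ _

lemma PosSemidef.norm_trace_eq_re_trace {S : Matrix n n 𝕜} (hS : S.PosSemidef) :
    ‖S.trace‖ = RCLike.re S.trace := by
  simpa using congrArg RCLike.re (RCLike.norm_of_nonneg' hS.trace_nonneg)

variable [DecidableEq n]

lemma posSemidef_fromBlocks_iff_exists_gram [DecidableEq m] {A : Matrix m m 𝕜} {B : Matrix m n 𝕜}
    {D : Matrix n n 𝕜} :
    (fromBlocks A B Bᴴ D).PosSemidef ↔ ∃ (T₁ : Matrix (m ⊕ n) m 𝕜) (T₂ : Matrix (m ⊕ n) n 𝕜),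
      A = T₁ᴴ * T₁ ∧ B = T₁ᴴ * T₂ ∧ D = T₂ᴴ * T₂ := by
  constructor
  · intro h
    obtain ⟨T, hT⟩ := CStarAlgebra.nonneg_iff_eq_star_mul_self.mp h.nonneg
    rw [star_eq_conjTranspose, ← fromCols_toCols T, conjTranspose_fromCols_mul_fromCols] at hT
    obtain ⟨hA, hB, -, hD⟩ := fromBlocks_inj.mp hT
    exact ⟨_, _, hA, hB, hD⟩
  · rintro ⟨T₁, T₂, rfl, rfl, rfl⟩
    rw [conjTranspose_mul, conjTranspose_conjTranspose, ← conjTranspose_fromCols_mul_fromCols]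
    exact posSemidef_conjTranspose_mul_self _

/-- `V = M S⁺`, where the pseudo-inverse `S⁺` is `x ↦ x⁻¹` applied to `S` (using `0⁻¹ = 0`). -/
lemma exists_contraction_mul_eq {M : Matrix m n 𝕜} {S : Matrix n n 𝕜} (hS : S.PosSemidef)
    (hM : Mᴴ * M = S * S) : ∃ V : Matrix m n 𝕜, Vᴴ * V ≤ 1 ∧ V * S = M ∧ Vᴴ * M = S := by
  have hc (f : ℝ → ℝ) : ContinuousOn f (spectrum ℝ S) := S.finite_real_spectrum.continuousOn f
  have hSa : IsSelfAdjoint S := hS.1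
  set P := cfc (·⁻¹ : ℝ → ℝ) S
  have hP : Pᴴ = P := (cfc_predicate _ S : IsSelfAdjoint P)
  have hSPS : S * P * S = S := by
    have h := cfc_congr (a := S) (f := fun x : ℝ => x * x⁻¹ * x) (g := fun x => x)
      fun x _ => mul_inv_mul_cancel x
    rwa [cfc_mul _ _ S (hc _) (hc _), cfc_mul _ _ S (hc _) (hc _), cfc_id' ℝ S] at h
  have hPSS : P * S * S = S := by
    have h := cfc_congr (a := S) (f := fun x : ℝ => x⁻¹ * x * x) (g := fun x => x)
      fun x _ => inv_mul_mul_self x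
    rwa [cfc_mul _ _ S (hc _) (hc _), cfc_mul _ _ S (hc _) (hc _), cfc_id' ℝ S] at h
  have hSP : S * P ≤ 1 := by
    rw [← cfc_id' ℝ S, ← cfc_mul _ _ _ (hc _) (hc _)]
    exact cfc_le_one _ _ fun x _ => by
      rcases eq_or_ne x 0 with rfl | hx <;> simp [*]
  have hMPS : M * P * S = M := by
    have h0 : (M * (1 - P * S))ᴴ * (M * (1 - P * S)) = 0 := by
      rw [conjTranspose_mul, Matrix.mul_assoc, ← Matrix.mul_assoc Mᴴ, hM, Matrix.mul_assoc S,
        Matrix.mul_sub, Matrix.mul_one, ← Matrix.mul_assoc S, hSPS, sub_self, Matrix.mul_zero,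
        Matrix.mul_zero]
    rw [conjTranspose_mul_self_eq_zero, Matrix.mul_sub, Matrix.mul_one, sub_eq_zero] at h0
    rw [Matrix.mul_assoc, ← h0]
  refine ⟨M * P, ?_, hMPS, ?_⟩
  · rwa [conjTranspose_mul, hP, Matrix.mul_assoc, ← Matrix.mul_assoc Mᴴ, hM,
      ← Matrix.mul_assoc, ← Matrix.mul_assoc, hPSS]
  · rw [conjTranspose_mul, hP, Matrix.mul_assoc, hM, ← Matrix.mul_assoc, hPSS]

lemma re_trace_conjTranspose_mul_self_le_of_contraction {V : Matrix m n 𝕜}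
    (hV : Vᴴ * V ≤ 1) (R : Matrix n l 𝕜) :
    RCLike.re ((V * R)ᴴ * (V * R)).trace ≤ RCLike.re (Rᴴ * R).trace := by
  have h := RCLike.nonneg_iff.mp ((le_iff.mp hV).conjTranspose_mul_mul_same R).trace_nonneg
  rw [Matrix.mul_sub, Matrix.sub_mul, trace_sub, map_sub, Matrix.mul_one] at h
  rw [conjTranspose_mul, ← Matrix.mul_assoc, Matrix.mul_assoc _ Vᴴ]
  linarith [h.1]

lemma norm_trace_conjTranspose_mul_mul_le {V W : Matrix m n 𝕜} (hV : Vᴴ * V ≤ 1)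
    (hW : Wᴴ * W ≤ 1) {S : Matrix n n 𝕜} (hS : S.PosSemidef) :
    ‖(Vᴴ * W * S).trace‖ ≤ RCLike.re S.trace := by
  obtain ⟨R, rfl⟩ := CStarAlgebra.nonneg_iff_eq_star_mul_self.mp hS.nonneg
  rw [star_eq_conjTranspose]
  have hR : 0 ≤ RCLike.re (Rᴴᴴ * Rᴴ).trace :=
    (RCLike.nonneg_iff.mp (posSemidef_conjTranspose_mul_self Rᴴ).trace_nonneg).1
  calc ‖(Vᴴ * W * (Rᴴ * R)).trace‖ = ‖((V * Rᴴ)ᴴ * (W * Rᴴ)).trace‖ := by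
        rw [conjTranspose_mul, conjTranspose_conjTranspose, ← Matrix.mul_assoc, trace_mul_comm]
        simp only [Matrix.mul_assoc]
    _ ≤ √(RCLike.re (Rᴴᴴ * Rᴴ).trace) * √(RCLike.re (Rᴴᴴ * Rᴴ).trace) := by
        refine (norm_trace_conjTranspose_mul_le _ _).trans ?_
        gcongr √?_ * √?_ <;> exact re_trace_conjTranspose_mul_self_le_of_contraction ‹_› _
    _ = RCLike.re (Rᴴ * R).trace := by
        rw [Real.mul_self_sqrt hR, conjTranspose_conjTranspose, trace_mul_comm]

lemma norm_trace_le_of_posSemidef_fromBlocks {σ ρ x : Matrix n n 𝕜}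
    (hx : (fromBlocks σ x xᴴ ρ).PosSemidef) :
    ‖x.trace‖ ≤ RCLike.re (CFC.abs (CFC.sqrt ρ * CFC.sqrt σ)).trace := by
  obtain ⟨T₁, T₂, rfl, rfl, rfl⟩ := posSemidef_fromBlocks_iff_exists_gram.mp hx
  set A := CFC.sqrt (T₁ᴴ * T₁)
  set B := CFC.sqrt (T₂ᴴ * T₂)
  have hA : Aᴴ = A := (CFC.sqrt_nonneg _).isSelfAdjoint
  have hB : Bᴴ = B := (CFC.sqrt_nonneg _).isSelfAdjoint
  have hS := (CFC.abs_nonneg (B * A)).posSemidef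
  obtain ⟨U, hU, hUA, -⟩ := exists_contraction_mul_eq (M := T₁) (CFC.sqrt_nonneg _).posSemidef
    (CFC.sqrt_mul_sqrt_self _ (posSemidef_conjTranspose_mul_self T₁).nonneg).symm
  obtain ⟨V, hV, hVS, -⟩ := exists_contraction_mul_eq (M := T₂ * A) hS (by
    rw [CFC.abs_mul_abs, star_eq_conjTranspose, conjTranspose_mul, conjTranspose_mul, hA, hB]
    simp only [Matrix.mul_assoc]
    rw [← Matrix.mul_assoc B,
      CFC.sqrt_mul_sqrt_self _ (posSemidef_conjTranspose_mul_self T₂).nonneg, Matrix.mul_assoc])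
  calc ‖(T₁ᴴ * T₂).trace‖ = ‖(Uᴴ * V * CFC.abs (B * A)).trace‖ := by
        rw [← hUA, Matrix.mul_assoc, hVS, conjTranspose_mul, hA, Matrix.mul_assoc,
          trace_mul_comm, Matrix.mul_assoc]
    _ ≤ _ := norm_trace_conjTranspose_mul_mul_le hU hV hS

lemma exists_posSemidef_fromBlocks_norm_trace_eq {σ ρ : Matrix n n 𝕜} (hσ : σ.PosSemidef)
    (hρ : ρ.PosSemidef) : ∃ x : Matrix n n 𝕜, (fromBlocks σ x xᴴ ρ).PosSemidef ∧
      ‖x.trace‖ = RCLike.re (CFC.abs (CFC.sqrt ρ * CFC.sqrt σ)).trace := by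
  set A := CFC.sqrt σ
  set B := CFC.sqrt ρ
  have hA : Aᴴ = A := (CFC.sqrt_nonneg _).isSelfAdjoint
  have hB : Bᴴ = B := (CFC.sqrt_nonneg _).isSelfAdjoint
  have hS := (CFC.abs_nonneg (B * A)).posSemidef
  obtain ⟨W, hW, -, hWS⟩ := exists_contraction_mul_eq (M := B * A) hS (CFC.abs_mul_abs _).symm
  set C := CFC.sqrt (1 - Wᴴ * W)
  have hC : Cᴴ = C := (CFC.sqrt_nonneg _).isSelfAdjoint
  have hCC : C * C = 1 - Wᴴ * W := CFC.sqrt_mul_sqrt_self _ (sub_nonneg.mpr hW)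
  refine ⟨A * Wᴴ * B, posSemidef_fromBlocks_iff_exists_gram.mpr
    ⟨fromRows (W * A) (C * A), fromRows B 0, ?_, ?_, ?_⟩, ?_⟩
  · rw [conjTranspose_fromRows_mul_fromRows, conjTranspose_mul, conjTranspose_mul, hA, hC]
    simp only [Matrix.mul_assoc]
    rw [← Matrix.mul_add, ← Matrix.mul_assoc C, hCC, ← Matrix.mul_assoc Wᴴ, ← Matrix.add_mul,
      add_sub_cancel, Matrix.one_mul, CFC.sqrt_mul_sqrt_self σ hσ.nonneg]
  · rw [conjTranspose_fromRows_mul_fromRows, conjTranspose_mul, hA, Matrix.mul_zero, add_zero]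
  · rw [conjTranspose_fromRows_mul_fromRows, hB, CFC.sqrt_mul_sqrt_self ρ hρ.nonneg,
      conjTranspose_zero, Matrix.zero_mul, add_zero]
  · rw [trace_mul_comm, ← Matrix.mul_assoc, trace_mul_comm, hWS, hS.norm_trace_eq_re_trace]

end Matrix

lemma matSqrt_eq_sqrt {d : ℕ} {M : Matrix (Fin d) (Fin d) ℂ} (hM : M.PosSemidef) :
    matSqrt M = CFC.sqrt M := by
  rw [matSqrt, dif_pos hM, CFC.sqrt_eq_real_sqrt M hM.nonneg, cfcₙ_eq_cfc, hM.1.cfc_eq,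
    IsHermitian.cfc, Unitary.conjStarAlgAut_apply]
  rfl

lemma matAbs_eq_abs {d : ℕ} (X : Matrix (Fin d) (Fin d) ℂ) : matAbs X = CFC.abs X :=
  matSqrt_eq_sqrt (posSemidef_conjTranspose_mul_self X)

theorem trace_abs_eq_sSup_block_general
    (d : ℕ)
    (σ ρ : Matrix (Fin d) (Fin d) ℂ) (hσ : σ.PosSemidef) (hρ : ρ.PosSemidef) :
    ((matAbs (matSqrt ρ * matSqrt σ)).trace).re =
      sSup {t : ℝ | ∃ x : Matrix (Fin d) (Fin d) ℂ,
        (Matrix.fromBlocks σ x xᴴ ρ).PosSemidef ∧ t = ‖x.trace‖} := by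
  rw [matAbs_eq_abs, matSqrt_eq_sqrt hρ, matSqrt_eq_sqrt hσ]
  obtain ⟨x, hx, hxtr⟩ := exists_posSemidef_fromBlocks_norm_trace_eq hσ hρ
  refine (IsGreatest.csSup_eq ⟨?_, ?_⟩).symm
  · exact ⟨x, hx, hxtr.symm⟩
  · rintro _ ⟨y, hy, rfl⟩
    exact norm_trace_le_of_posSemidef_fromBlocks hy

/-- for positive semidefinite `σ, ρ`, `tr |ρ^{1/2} σ^{1/2}|` is the supremum of
`|tr x|` over all `x` for which the block matrix `[[σ, x], [xᴴ, ρ]]` is positive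
semidefinite. -/
theorem trace_abs_eq_sSup_block
    (d : ℕ) (hd : 1 ≤ d)
    (σ ρ : Matrix (Fin d) (Fin d) ℂ) (hσ : σ.PosSemidef) (hρ : ρ.PosSemidef) :
    ((matAbs (matSqrt ρ * matSqrt σ)).trace).re =
      sSup {t : ℝ | ∃ x : Matrix (Fin d) (Fin d) ℂ,
        (Matrix.fromBlocks σ x xᴴ ρ).PosSemidef ∧ t = ‖x.trace‖} :=
  trace_abs_eq_sSup_block_general d σ ρ hσ hρ
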